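/- arXiv:2005.08371 — 2 statements merged into one kernel-verified Lean document; each statement's English description precedes it below -/
import Mathlib

section
/- Let d ≥ 1, E = EuclideanSpace ℝ (Fin d), ε > 0, let φ : E → ℝ and δ : ℝ → ℝ be smooth. Define η(x) := √(‖∇φ(x)‖² + ε²), ν(x) := ∇φ(x)/η(x), κ(x) := div ν(x), δ_Γ(x) := δ(φ(x))·η(x), P_T(x)b := b − ⟪ν(x), b⟫ν(x), and let Hess φ(x) denote the spatial Hessian of φ as a symmetric linear map E → E. Then for every vector e ∈ E and every x ∈ E: δ_Γ(x)·div( x' ↦ P_T(x') e )(x) = −δ_Γ(x)·κ(x)·⟪ν(x), e⟫ − (δ_Γ(x)/η(x)²)·⟪P_T(x)((Hess φ(x))(∇φ(x))), e⟫. -/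
open scoped RealInnerProductSpace

noncomputable section

/-- Spatial gradient of a scalar field on Euclidean space. -/
def sgrad {d : ℕ} (f : EuclideanSpace ℝ (Fin d) → ℝ) (x : EuclideanSpace ℝ (Fin d)) :
    EuclideanSpace ℝ (Fin d) := gradient f x

/-- Divergence of a vector field on Euclidean space (trace of Jacobian). -/
def sdiv {d : ℕ} (u : EuclideanSpace ℝ (Fin d) → EuclideanSpace ℝ (Fin d))
    (x : EuclideanSpace ℝ (Fin d)) : ℝ :=
  LinearMap.trace ℝ (EuclideanSpace ℝ (Fin d)) (fderiv ℝ u x : _ →ₗ[ℝ] _)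

/-- Spatial Hessian of a scalar field, as a (continuous) linear map `E → E`:
the Fréchet derivative of the gradient field. -/
def sHess {d : ℕ} (f : EuclideanSpace ℝ (Fin d) → ℝ) (x : EuclideanSpace ℝ (Fin d)) :
    EuclideanSpace ℝ (Fin d) →L[ℝ] EuclideanSpace ℝ (Fin d) :=
  fderiv ℝ (sgrad f) x

lemma trace_smulRight_aux {d : ℕ} (f : EuclideanSpace ℝ (Fin d) →L[ℝ] ℝ)
    (w : EuclideanSpace ℝ (Fin d)) :
    LinearMap.trace ℝ (EuclideanSpace ℝ (Fin d))
      ((f.smulRight w : EuclideanSpace ℝ (Fin d) →L[ℝ] EuclideanSpace ℝ (Fin d)) :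
        EuclideanSpace ℝ (Fin d) →ₗ[ℝ] EuclideanSpace ℝ (Fin d)) = f w := by
  have h1 : ((f.smulRight w : EuclideanSpace ℝ (Fin d) →L[ℝ] EuclideanSpace ℝ (Fin d)) :
        EuclideanSpace ℝ (Fin d) →ₗ[ℝ] EuclideanSpace ℝ (Fin d))
      = (LinearMap.toSpanSingleton ℝ (EuclideanSpace ℝ (Fin d)) w) ∘ₗ
        (f : EuclideanSpace ℝ (Fin d) →ₗ[ℝ] ℝ) := by
    ext v; simp [LinearMap.toSpanSingleton_apply]
  rw [h1, LinearMap.trace_comp_comm']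
  have h2 : (f : EuclideanSpace ℝ (Fin d) →ₗ[ℝ] ℝ) ∘ₗ
      (LinearMap.toSpanSingleton ℝ (EuclideanSpace ℝ (Fin d)) w) = (f w) • LinearMap.id := by
    ext; simp [LinearMap.toSpanSingleton_apply]
  rw [h2, map_smul, LinearMap.trace_id]
  simp


/-- Eq. (B.10) in the proof of Proposition B.1: the surface Dirac times the divergence of
the tangential projector applied to a fixed vector `e`. -/
theorem surface_dirac_mul_div_tangential_projection
    (d : ℕ) (hd : 1 ≤ d) (ε : ℝ) (hε : 0 < ε)
    (φ : EuclideanSpace ℝ (Fin d) → ℝ) (δ : ℝ → ℝ)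
    (hφ : ContDiff ℝ (⊤ : ℕ∞) φ) (hδ : ContDiff ℝ (⊤ : ℕ∞) δ)
    (η : EuclideanSpace ℝ (Fin d) → ℝ)
    (hη : ∀ x, η x = Real.sqrt (‖sgrad φ x‖ ^ 2 + ε ^ 2))
    (ν : EuclideanSpace ℝ (Fin d) → EuclideanSpace ℝ (Fin d))
    (hν : ∀ x, ν x = (η x)⁻¹ • sgrad φ x)
    (κ : EuclideanSpace ℝ (Fin d) → ℝ)
    (hκ : ∀ x, κ x = sdiv ν x)
    (δΓ : EuclideanSpace ℝ (Fin d) → ℝ)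
    (hδΓ : ∀ x, δΓ x = δ (φ x) * η x)
    (P_T : EuclideanSpace ℝ (Fin d) → EuclideanSpace ℝ (Fin d) → EuclideanSpace ℝ (Fin d))
    (hPT : ∀ x b, P_T x b = b - ⟪ν x, b⟫ • ν x) :
    ∀ (e : EuclideanSpace ℝ (Fin d)) (x : EuclideanSpace ℝ (Fin d)),
      δΓ x * sdiv (fun y => P_T y e) x
        = -(δΓ x * κ x * ⟪ν x, e⟫)
          - (δΓ x / (η x) ^ 2) * ⟪P_T x ((sHess φ x) (sgrad φ x)), e⟫ := by
  intro e x
  -- smoothness of the gradient field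
  have hgc : ContDiff ℝ (⊤ : ℕ∞) (sgrad φ) := by
    have h1 : ContDiff ℝ (⊤ : ℕ∞) (fderiv ℝ φ) := hφ.fderiv_right (by simp)
    have := ((InnerProductSpace.toDual ℝ (EuclideanSpace ℝ (Fin d))).symm.contDiff).comp h1
    exact this
  set G : EuclideanSpace ℝ (Fin d) := sgrad φ x with hG
  set H : EuclideanSpace ℝ (Fin d) →L[ℝ] EuclideanSpace ℝ (Fin d) := sHess φ x with hHdef
  have hH : HasFDerivAt (sgrad φ) H x :=
    ((hgc.differentiable (by simp)) x).hasFDerivAt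
  -- positivity of η
  have hqpos : (0:ℝ) < ‖G‖ ^ 2 + ε ^ 2 := by positivity
  set a : ℝ := η x with ha
  have hapos : 0 < a := by
    rw [ha, hη]; exact Real.sqrt_pos.2 hqpos
  have hane : a ≠ 0 := ne_of_gt hapos
  have hax : Real.sqrt (‖G‖ ^ 2 + ε ^ 2) = a := (hη x).symm
  -- derivative of the squared-norm field
  have hinner : HasFDerivAt (fun y => (⟪sgrad φ y, sgrad φ y⟫ : ℝ))
      ((fderivInnerCLM ℝ (G, G)).comp (H.prod H)) x := hH.inner ℝ hH
  set Q : EuclideanSpace ℝ (Fin d) →L[ℝ] ℝ := (fderivInnerCLM ℝ (G, G)).comp (H.prod H)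
    with hQdef
  have hQapp : ∀ v, Q v = 2 * ⟪G, H v⟫ := by
    intro v
    simp [hQdef, fderivInnerCLM_apply, real_inner_comm (H v) G]
    ring
  have hq' : HasFDerivAt (fun y => ‖sgrad φ y‖ ^ 2 + ε ^ 2) Q x := by
    have : (fun y => ‖sgrad φ y‖ ^ 2 + ε ^ 2)
        = fun y => (⟪sgrad φ y, sgrad φ y⟫ : ℝ) + ε ^ 2 := by
      funext y; rw [real_inner_self_eq_norm_sq]
    rw [this]
    simpa using hinner.add_const (ε ^ 2)
  -- derivative of η
  set η' : EuclideanSpace ℝ (Fin d) →L[ℝ] ℝ := (1 / (2 * a)) • Q with hη'def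
  have hηd : HasFDerivAt η η' x := by
    have h := hq'.sqrt (ne_of_gt hqpos)
    rw [hax] at h
    have : η = fun y => Real.sqrt (‖sgrad φ y‖ ^ 2 + ε ^ 2) := funext hη
    rw [this]
    exact h
  have hη'app : ∀ v, η' v = a⁻¹ * ⟪G, H v⟫ := by
    intro v
    simp [hη'def, hQapp]
    field_simp
  -- derivative of η⁻¹
  have hinvd : HasFDerivAt (fun y => (η y)⁻¹) ((-(a ^ 2)⁻¹ : ℝ) • η') x := by
    have h := (hasDerivAt_inv hane).comp_hasFDerivAt x hηd
    exact h
  -- derivative of ν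
  set N : EuclideanSpace ℝ (Fin d) →L[ℝ] EuclideanSpace ℝ (Fin d) :=
    a⁻¹ • H + ((-(a ^ 2)⁻¹ : ℝ) • η').smulRight G with hNdef
  have hνd : HasFDerivAt ν N x := by
    have : ν = fun y => (η y)⁻¹ • sgrad φ y := funext hν
    rw [this]
    have h := hinvd.smul hH
    rw [← ha, ← hG] at h
    exact h
  have hfderivν : fderiv ℝ ν x = N := hνd.fderiv
  -- the key algebraic computation: N (ν x) = a⁻² • P_T x (H G)
  have hkey : N (ν x) = (a ^ 2)⁻¹ • P_T x (H G) := by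
    rw [hν x, hPT, hν x, ← ha, ← hG]
    simp only [hNdef, ContinuousLinearMap.add_apply, ContinuousLinearMap.smul_apply,
      ContinuousLinearMap.smulRight_apply, map_smul, hη'app,
      real_inner_smul_left, real_inner_smul_right]
    match_scalars <;> (try simp only [smul_eq_mul]) <;> ring
  -- derivative of y ↦ ⟪ν y, e⟫
  have hfd : HasFDerivAt (fun y => (⟪ν y, e⟫ : ℝ)) ((innerSL ℝ e).comp N) x := by
    have h := ((innerSL ℝ e).hasFDerivAt (x := ν x)).comp x hνd
    have heq : (fun y => (⟪ν y, e⟫ : ℝ)) = fun y => (innerSL ℝ e) (ν y) := by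
      funext y; rw [innerSL_apply_apply]; exact real_inner_comm _ _
    rw [heq]
    exact h
  -- derivative of the projected field
  set D : EuclideanSpace ℝ (Fin d) →L[ℝ] EuclideanSpace ℝ (Fin d) :=
    (0 : EuclideanSpace ℝ (Fin d) →L[ℝ] EuclideanSpace ℝ (Fin d)) -
      ((⟪ν x, e⟫ : ℝ) • N + ((innerSL ℝ e).comp N).smulRight (ν x)) with hDdef
  have hPd : HasFDerivAt (fun y => P_T y e) D x := by
    have h := (hasFDerivAt_const e x).sub (hfd.smul hνd)
    have heq : (fun y => P_T y e) = fun y => e - (⟪ν y, e⟫ : ℝ) • ν y := by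
      funext y; rw [hPT]
    rw [heq]
    exact h
  -- compute the divergence
  have hdiv : sdiv (fun y => P_T y e) x
      = -((⟪ν x, e⟫ : ℝ) * κ x + (a ^ 2)⁻¹ * ⟪P_T x (H G), e⟫) := by
    rw [sdiv, hPd.fderiv, hDdef]
    have hcoe : ((((0 : EuclideanSpace ℝ (Fin d) →L[ℝ] EuclideanSpace ℝ (Fin d)) -
        ((⟪ν x, e⟫ : ℝ) • N + ((innerSL ℝ e).comp N).smulRight (ν x))) :
        EuclideanSpace ℝ (Fin d) →L[ℝ] EuclideanSpace ℝ (Fin d)) :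
        EuclideanSpace ℝ (Fin d) →ₗ[ℝ] EuclideanSpace ℝ (Fin d))
        = -(((⟪ν x, e⟫ : ℝ) • N : EuclideanSpace ℝ (Fin d) →L[ℝ] _) :
            EuclideanSpace ℝ (Fin d) →ₗ[ℝ] _) -
          ((((innerSL ℝ e).comp N).smulRight (ν x) : EuclideanSpace ℝ (Fin d) →L[ℝ] _) :
            EuclideanSpace ℝ (Fin d) →ₗ[ℝ] _) := by
      ext v; simp; ring
    rw [hcoe, map_sub, map_neg]
    rw [trace_smulRight_aux]
    have h1 : (((⟪ν x, e⟫ : ℝ) • N : EuclideanSpace ℝ (Fin d) →L[ℝ] _) :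
        EuclideanSpace ℝ (Fin d) →ₗ[ℝ] _) = (⟪ν x, e⟫ : ℝ) •
        (N : EuclideanSpace ℝ (Fin d) →ₗ[ℝ] EuclideanSpace ℝ (Fin d)) := by
      ext v; simp
    rw [h1, map_smul]
    have h2 : LinearMap.trace ℝ (EuclideanSpace ℝ (Fin d)) (N : _ →ₗ[ℝ] _) = κ x := by
      rw [hκ, sdiv, hfderivν]
    rw [h2]
    have h3 : ((innerSL ℝ e).comp N) (ν x) = (a ^ 2)⁻¹ * ⟪P_T x (H G), e⟫ := by
      simp only [ContinuousLinearMap.comp_apply, innerSL_apply_apply, hkey]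
      rw [real_inner_smul_right, real_inner_comm]
    rw [h3]
    simp only [smul_eq_mul]
    ring
  rw [hdiv, hκ, ← hκ]
  have : δΓ x / a ^ 2 = δΓ x * (a ^ 2)⁻¹ := by field_simp
  rw [← ha] at *
  ring
end
end

section
/- Let d ≥ 1, E = EuclideanSpace ℝ (Fin d). Let u : E → E be smooth with compact support and div u(x) = 0 for all x, and let ρ : E → ℝ be smooth. Then ∫_E ρ(x)·⟪(Du(x))(u(x)), u(x)⟫ dx + ½ ∫_E ‖u(x)‖²·⟪u(x), ∇ρ(x)⟫ dx = 0, where Du is the Jacobian of u so that (Du)u is the convective derivative u·∇u. -/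
open scoped RealInnerProductSpace
open MeasureTheory

noncomputable section

lemma trace_smulRight' {E : Type*} [NormedAddCommGroup E] [NormedSpace ℝ E]
    [FiniteDimensional ℝ E] (L : E →L[ℝ] ℝ) (v : E) :
    LinearMap.trace ℝ E ((L.smulRight v : E →L[ℝ] E) : E →ₗ[ℝ] E) = L v := by
  have h : ((L.smulRight v : E →L[ℝ] E) : E →ₗ[ℝ] E)
      = (LinearMap.toSpanSingleton ℝ E v).comp (L : E →ₗ[ℝ] ℝ) := by
    ext w; simp [LinearMap.toSpanSingleton_apply]
  rw [h, LinearMap.trace_comp_comm']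
  rw [LinearMap.trace_eq_matrix_trace ℝ (Module.Basis.singleton Unit ℝ)]
  simp [Matrix.trace, LinearMap.toMatrix_apply, LinearMap.toSpanSingleton_apply]

lemma integral_fderiv_apply_zero {E : Type*} [NormedAddCommGroup E] [NormedSpace ℝ E]
    [MeasurableSpace E] [BorelSpace E] [FiniteDimensional ℝ E] (μ : Measure E)
    [μ.IsAddHaarMeasure] (g : E → ℝ) (hg : ContDiff ℝ (⊤ : ℕ∞) g)
    (hsupp : HasCompactSupport g) (v : E) :
    ∫ x, fderiv ℝ g x v ∂μ = 0 := by
  have hg' : Continuous fun x => fderiv ℝ g x v :=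
    (hg.continuous_fderiv (by simp)).clm_apply continuous_const
  have hs' : HasCompactSupport fun x => fderiv ℝ g x v :=
    (hsupp.fderiv ℝ).comp_left (g := fun L : E →L[ℝ] ℝ => L v) (by simp)
  have h := integral_mul_fderiv_eq_neg_fderiv_mul_of_integrable
    (μ := μ) (f := fun _ : E => (1:ℝ)) (g := g) (v := v)
    (by simpa [fderiv_const] using (integrable_zero E ℝ μ))
    (by simpa using hg'.integrable_of_hasCompactSupport hs')
    (by simpa using hg.continuous.integrable_of_hasCompactSupport hsupp)
    (fun x _ => differentiableAt_const (1:ℝ)) (fun x _ => hg.differentiable (by simp) x)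
  simpa [fderiv_const] using h

lemma sdiv_eq_sum {d : ℕ} (F : EuclideanSpace ℝ (Fin d) → EuclideanSpace ℝ (Fin d))
    (x : EuclideanSpace ℝ (Fin d)) :
    sdiv F x = ∑ i, fderiv ℝ F x ((EuclideanSpace.basisFun (Fin d) ℝ).toBasis i) i := by
  rw [sdiv, LinearMap.trace_eq_matrix_trace ℝ (EuclideanSpace.basisFun (Fin d) ℝ).toBasis]
  simp [Matrix.trace, LinearMap.toMatrix_apply, EuclideanSpace.basisFun_repr]

lemma integral_sdiv_zero {d : ℕ} (F : EuclideanSpace ℝ (Fin d) → EuclideanSpace ℝ (Fin d))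
    (hF : ContDiff ℝ (⊤ : ℕ∞) F) (hsupp : HasCompactSupport F) :
    ∫ x, sdiv F x = 0 := by
  have hFd := hF.differentiable (by simp)
  set b := (EuclideanSpace.basisFun (Fin d) ℝ).toBasis with hb
  have hgsm : ∀ i : Fin d, ContDiff ℝ (⊤ : ℕ∞) fun y => F y i := fun i =>
    (EuclideanSpace.proj (𝕜 := ℝ) i).contDiff.comp hF
  have hgsupp : ∀ i : Fin d, HasCompactSupport fun y => F y i := fun i =>
    hsupp.comp_left (g := fun w : EuclideanSpace ℝ (Fin d) => w i) (by simp)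
  have hcoordderiv : ∀ (i : Fin d) x, fderiv ℝ (fun y => F y i) x (b i)
      = fderiv ℝ F x (b i) i := by
    intro i x
    have : HasFDerivAt (fun y => F y i)
        ((EuclideanSpace.proj (𝕜 := ℝ) i).comp (fderiv ℝ F x)) x :=
      (EuclideanSpace.proj (𝕜 := ℝ) i).hasFDerivAt.comp x (hFd x).hasFDerivAt
    rw [this.fderiv]; rfl
  have hint : ∀ i : Fin d, Integrable (fun x => fderiv ℝ F x (b i) i) volume := by
    intro i
    have hc : Continuous fun x => fderiv ℝ (fun y => F y i) x (b i) :=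
      ((hgsm i).continuous_fderiv (by simp)).clm_apply continuous_const
    have hs : HasCompactSupport fun x => fderiv ℝ (fun y => F y i) x (b i) :=
      (((hgsupp i).fderiv ℝ)).comp_left
        (g := fun L : EuclideanSpace ℝ (Fin d) →L[ℝ] ℝ => L (b i)) (by simp)
    have := hc.integrable_of_hasCompactSupport (μ := volume) hs
    exact this.congr (Filter.Eventually.of_forall fun x => (hcoordderiv i x))
  calc ∫ x, sdiv F x = ∫ x, ∑ i, fderiv ℝ F x (b i) i := by
        simp_rw [sdiv_eq_sum]
        rfl
    _ = ∑ i, ∫ x, fderiv ℝ F x (b i) i := integral_finset_sum _ fun i _ => hint i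
    _ = 0 := by
        apply Finset.sum_eq_zero
        intro i _
        rw [show (fun x => fderiv ℝ F x (b i) i) = fun x => fderiv ℝ (fun y => F y i) x (b i)
          from funext fun x => (hcoordderiv i x).symm]
        exact integral_fderiv_apply_zero volume _ (hgsm i) (hgsupp i) (b i)



/-- Identity (4.17a) in the proof of Theorem 4.2: for a divergence-free, compactly
supported velocity, the convective term cancels the kinetic part of the interface
coupling term. -/
theorem convective_kinetic_cancellation
    (d : ℕ) (hd : 1 ≤ d)
    (u : EuclideanSpace ℝ (Fin d) → EuclideanSpace ℝ (Fin d))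
    (ρ : EuclideanSpace ℝ (Fin d) → ℝ)
    (hu : ContDiff ℝ (⊤ : ℕ∞) u) (husupp : HasCompactSupport u)
    (hdiv : ∀ x, sdiv u x = 0)
    (hρ : ContDiff ℝ (⊤ : ℕ∞) ρ) :
    (∫ x, ρ x * ⟪(fderiv ℝ u x) (u x), u x⟫)
      + (1 / 2) * (∫ x, ‖u x‖ ^ 2 * ⟪u x, sgrad ρ x⟫) = 0 := by
  set c : EuclideanSpace ℝ (Fin d) → ℝ := fun x => (1/2 : ℝ) * (ρ x * ⟪u x, u x⟫) with hc
  set F : EuclideanSpace ℝ (Fin d) → EuclideanSpace ℝ (Fin d) := fun x => c x • u x with hF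
  have hud := hu.differentiable (by simp)
  have hρd := hρ.differentiable (by simp)
  have hinnersm : ContDiff ℝ (⊤ : ℕ∞) fun x => ⟪u x, u x⟫ := hu.inner ℝ hu
  have hcsm : ContDiff ℝ (⊤ : ℕ∞) c := contDiff_const.mul (hρ.mul hinnersm)
  have hFsm : ContDiff ℝ (⊤ : ℕ∞) F := hcsm.smul hu
  have hFsupp : HasCompactSupport F := by
    apply HasCompactSupport.intro husupp.isCompact
    intro x hx
    simp [hF, image_eq_zero_of_notMem_tsupport hx]
  -- gradient vs fderiv
  have hgrad : ∀ x, ∀ v : EuclideanSpace ℝ (Fin d), fderiv ℝ ρ x v = ⟪sgrad ρ x, v⟫ := by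
    intro x v
    have h1 : HasGradientAt ρ (gradient ρ x) x := (hρd x).hasGradientAt
    rw [hasGradientAt_iff_hasFDerivAt] at h1
    rw [h1.fderiv, sgrad]
    exact InnerProductSpace.toDual_apply_apply
  -- pointwise divergence identity
  have key : ∀ x, sdiv F x
      = ρ x * ⟪(fderiv ℝ u x) (u x), u x⟫ + (1/2) * (‖u x‖ ^ 2 * ⟪u x, sgrad ρ x⟫) := by
    intro x
    have hcx : DifferentiableAt ℝ c x := (hcsm.differentiable (by simp)) x
    have hDF : fderiv ℝ F x = c x • fderiv ℝ u x + (fderiv ℝ c x).smulRight (u x) :=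
      fderiv_smul hcx (hud x)
    have htr : sdiv F x = c x * sdiv u x + fderiv ℝ c x (u x) := by
      rw [sdiv, hDF]
      have hcoe : (((c x • fderiv ℝ u x + (fderiv ℝ c x).smulRight (u x)) :
            EuclideanSpace ℝ (Fin d) →L[ℝ] EuclideanSpace ℝ (Fin d)) :
            EuclideanSpace ℝ (Fin d) →ₗ[ℝ] EuclideanSpace ℝ (Fin d))
          = c x • ((fderiv ℝ u x : EuclideanSpace ℝ (Fin d) →L[ℝ] EuclideanSpace ℝ (Fin d)) :
              EuclideanSpace ℝ (Fin d) →ₗ[ℝ] EuclideanSpace ℝ (Fin d))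
            + (((fderiv ℝ c x).smulRight (u x) :
                EuclideanSpace ℝ (Fin d) →L[ℝ] EuclideanSpace ℝ (Fin d)) :
                EuclideanSpace ℝ (Fin d) →ₗ[ℝ] EuclideanSpace ℝ (Fin d)) := by
        ext w; simp
      rw [hcoe, map_add, LinearMap.map_smul, trace_smulRight']
      simp [sdiv, smul_eq_mul]
    rw [htr, hdiv x, mul_zero, zero_add]
    -- compute fderiv c x (u x)
    have hinx : DifferentiableAt ℝ (fun y => ⟪u y, u y⟫) x := (hinnersm.differentiable (by simp)) x
    have h1 : fderiv ℝ (fun y => ⟪u y, u y⟫) x (u x) = 2 * ⟪(fderiv ℝ u x) (u x), u x⟫ := by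
      rw [fderiv_inner_apply (𝕜 := ℝ) (hud x) (hud x)]
      rw [real_inner_comm (u x)]
      ring
    have h2 : fderiv ℝ c x (u x)
        = (1/2) * (fderiv ℝ ρ x (u x) * ⟪u x, u x⟫ + ρ x * (2 * ⟪(fderiv ℝ u x) (u x), u x⟫)) := by
      rw [hc]
      have hd1 : fderiv ℝ (fun y => ρ y * ⟪u y, u y⟫) x
          = ρ x • fderiv ℝ (fun y => ⟪u y, u y⟫) x + ⟪u x, u x⟫ • fderiv ℝ ρ x :=
        fderiv_mul (hρd x) hinx
      rw [fderiv_const_mul (show DifferentiableAt ℝ (fun y => ρ y * ⟪u y, u y⟫) x from (hρd x).mul hinx), hd1]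
      simp only [ContinuousLinearMap.coe_smul', Pi.smul_apply, ContinuousLinearMap.add_apply,
        smul_eq_mul, h1]
      ring
    rw [h2, hgrad x (u x), real_inner_comm (sgrad ρ x) (u x), real_inner_self_eq_norm_sq]
    ring
  -- integrability of the two pieces
  have hK := husupp.isCompact
  have hterm1cont : Continuous fun x => ρ x * ⟪(fderiv ℝ u x) (u x), u x⟫ :=
    hρ.continuous.mul (Continuous.inner
      (((hu.continuous_fderiv (by simp)).clm_apply hu.continuous)) hu.continuous)
  have hterm1supp : HasCompactSupport fun x => ρ x * ⟪(fderiv ℝ u x) (u x), u x⟫ := by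
    apply HasCompactSupport.intro hK
    intro x hx
    have h0 : u x = 0 := image_eq_zero_of_notMem_tsupport hx
    simp [h0]
  have hgradcont : Continuous fun x => sgrad ρ x := by
    have heq : (fun x => sgrad ρ x)
        = fun x => (InnerProductSpace.toDual ℝ (EuclideanSpace ℝ (Fin d))).symm (fderiv ℝ ρ x) := by
      funext x; rfl
    rw [heq]
    exact (InnerProductSpace.toDual ℝ _).symm.continuous.comp (hρ.continuous_fderiv (by simp))
  have hterm2cont : Continuous fun x => ‖u x‖ ^ 2 * ⟪u x, sgrad ρ x⟫ :=
    ((hu.continuous.norm).pow 2).mul (Continuous.inner hu.continuous hgradcont)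
  have hterm2supp : HasCompactSupport fun x => ‖u x‖ ^ 2 * ⟪u x, sgrad ρ x⟫ := by
    apply HasCompactSupport.intro hK
    intro x hx
    have h0 : u x = 0 := image_eq_zero_of_notMem_tsupport hx
    simp [h0]
  have hint1 := hterm1cont.integrable_of_hasCompactSupport (μ := volume) hterm1supp
  have hint2 := hterm2cont.integrable_of_hasCompactSupport (μ := volume) hterm2supp
  calc (∫ x, ρ x * ⟪(fderiv ℝ u x) (u x), u x⟫)
        + (1 / 2) * (∫ x, ‖u x‖ ^ 2 * ⟪u x, sgrad ρ x⟫)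
      = (∫ x, ρ x * ⟪(fderiv ℝ u x) (u x), u x⟫)
        + (∫ x, (1/2) * (‖u x‖ ^ 2 * ⟪u x, sgrad ρ x⟫)) := by
        rw [integral_const_mul]
    _ = ∫ x, (ρ x * ⟪(fderiv ℝ u x) (u x), u x⟫ + (1/2) * (‖u x‖ ^ 2 * ⟪u x, sgrad ρ x⟫)) := by
        rw [integral_add hint1 (hint2.const_mul _)]
    _ = ∫ x, sdiv F x := by
        congr 1; funext x; rw [key x]
    _ = 0 := integral_sdiv_zero F hFsm hFsupp
end
end
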